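/- For every n ≥ 3, the cycle C_n satisfies η_p(C_n) = 3. -/
import Mathlib


open SimpleGraph Set

/-- Distance from a vertex to a set of vertices. -/
noncomputable def pDist {V : Type*} (G : SimpleGraph V) (v : V) (S : Set V) : ℕ :=
  sInf (G.dist v '' S)

/-- A family of sets of vertices is resolving if every pair of distinct vertices
is distinguished by its distance to some part. -/
def IsResolvingFam {V : Type*} (G : SimpleGraph V) (P : Set (Set V)) : Prop :=
  ∀ u v : V, u ≠ v → ∃ S ∈ P, pDist G u S ≠ pDist G v S

/-- A family of sets is dominating if every vertex is at distance exactly 1 from some part. -/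
def IsDominatingFam {V : Type*} (G : SimpleGraph V) (P : Set (Set V)) : Prop :=
  ∀ v : V, ∃ S ∈ P, pDist G v S = 1

/-- The partition domination number: minimum cardinality of a dominating partition. -/
noncomputable def gammaP {V : Type*} (G : SimpleGraph V) : ℕ :=
  sInf {k | ∃ P : Set (Set V), Setoid.IsPartition P ∧ IsDominatingFam G P ∧ P.ncard = k}

/-- The partition dimension: minimum cardinality of a resolving partition. -/
noncomputable def betaP {V : Type*} (G : SimpleGraph V) : ℕ :=
  sInf {k | ∃ P : Set (Set V), Setoid.IsPartition P ∧ IsResolvingFam G P ∧ P.ncard = k}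

/-- The dominating partition dimension: minimum cardinality of a resolving dominating partition. -/
noncomputable def etaP {V : Type*} (G : SimpleGraph V) : ℕ :=
  sInf {k | ∃ P : Set (Set V), Setoid.IsPartition P ∧ IsResolvingFam G P ∧
    IsDominatingFam G P ∧ P.ncard = k}

/-- A resolving set of vertices. -/
def IsResolvingSet {V : Type*} (G : SimpleGraph V) (S : Set V) : Prop :=
  ∀ u v : V, u ≠ v → ∃ x ∈ S, G.dist u x ≠ G.dist v x

/-- A dominating set of vertices. -/
def IsDominatingSet {V : Type*} (G : SimpleGraph V) (S : Set V) : Prop :=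
  ∀ v : V, v ∉ S → ∃ u ∈ S, G.Adj u v

/-- The resolving domination number η(G). -/
noncomputable def etaNum {V : Type*} (G : SimpleGraph V) : ℕ :=
  sInf {k | ∃ S : Set V, IsResolvingSet G S ∧ IsDominatingSet G S ∧ S.ncard = k}

/-- A twin set: pairwise twin vertices. -/
def IsTwinSet {V : Type*} (G : SimpleGraph V) (W : Set V) : Prop :=
  ∀ u ∈ W, ∀ v ∈ W, ∀ w : V, w ≠ u → w ≠ v → G.dist u w = G.dist v w

/-- The join of two graphs. -/
def gJoin {α β : Type*} (G : SimpleGraph α) (H : SimpleGraph β) : SimpleGraph (α ⊕ β) :=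
  SimpleGraph.fromRel (fun x y =>
    (∃ a b, x = Sum.inl a ∧ y = Sum.inl b ∧ G.Adj a b) ∨
    (∃ a b, x = Sum.inr a ∧ y = Sum.inr b ∧ H.Adj a b) ∨
    (∃ a b, x = Sum.inl a ∧ y = Sum.inr b))

/-- The disjoint union of two graphs. -/
def gUnion {α β : Type*} (G : SimpleGraph α) (H : SimpleGraph β) : SimpleGraph (α ⊕ β) :=
  SimpleGraph.fromRel (fun x y =>
    (∃ a b, x = Sum.inl a ∧ y = Sum.inl b ∧ G.Adj a b) ∨
    (∃ a b, x = Sum.inr a ∧ y = Sum.inr b ∧ H.Adj a b))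


private lemma fin_sub_val {n : ℕ} (a b : Fin n) :
    (a - b).val = if b.val ≤ a.val then a.val - b.val else a.val + n - b.val := by
  rw [Fin.sub_def]
  have ha := a.isLt; have hb := b.isLt
  dsimp only
  split_ifs with h
  · have : (n - b.val + a.val) = n + (a.val - b.val) := by omega
    rw [this, Nat.add_mod_left, Nat.mod_eq_of_lt (by omega)]
  · rw [Nat.mod_eq_of_lt (by omega)]; omega

private lemma cyc_adj {n : ℕ} (hn : 3 ≤ n) {u v : Fin n} :
    (SimpleGraph.cycleGraph n).Adj u v ↔
      (u.val + 1 = v.val ∨ v.val + 1 = u.val ∨ (u.val = 0 ∧ v.val + 1 = n) ∨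
        (v.val = 0 ∧ u.val + 1 = n)) := by
  rw [SimpleGraph.cycleGraph_adj', fin_sub_val, fin_sub_val]
  have ha := u.isLt; have hb := v.isLt
  split_ifs <;> omega

private lemma cyc_connected {n : ℕ} (hn : 3 ≤ n) : (SimpleGraph.cycleGraph n).Connected := by
  cases n with
  | zero => omega
  | succ m => exact SimpleGraph.cycleGraph_connected

private lemma walk_ge {n : ℕ} (hn : 3 ≤ n) {u v : Fin n}
    (w : (SimpleGraph.cycleGraph n).Walk u v) :
    min v.val (n - v.val) ≤ min u.val (n - u.val) + w.length := by
  induction w with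
  | nil => simp
  | @cons a b c h p ih =>
    have hl : min b.val (n - b.val) ≤ min a.val (n - a.val) + 1 := by
      rw [cyc_adj hn] at h
      have := a.isLt; have := b.isLt
      omega
    simp only [SimpleGraph.Walk.length_cons]
    omega

private lemma dist_add {n : ℕ} (hn : 3 ≤ n) : ∀ (d : ℕ) (a b : Fin n), b.val = a.val + d →
    (SimpleGraph.cycleGraph n).dist a b ≤ d := by
  intro d
  induction d with
  | zero =>
    intro a b h
    have : a = b := Fin.ext (by omega)
    subst this; simp
  | succ d ih =>
    intro a b h
    have hb := b.isLt
    have hc : a.val + d < n := by omega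
    have hadj : (SimpleGraph.cycleGraph n).Adj ⟨a.val + d, hc⟩ b := by
      rw [cyc_adj hn]
      simp only [Fin.val_mk]
      omega
    calc (SimpleGraph.cycleGraph n).dist a b
        ≤ (SimpleGraph.cycleGraph n).dist a ⟨a.val + d, hc⟩ +
          (SimpleGraph.cycleGraph n).dist ⟨a.val + d, hc⟩ b := (cyc_connected hn).dist_triangle
      _ ≤ d + 1 := by
          have h1 := ih a ⟨a.val + d, hc⟩ rfl
          have h2 : (SimpleGraph.cycleGraph n).dist ⟨a.val + d, hc⟩ b = 1 :=
            SimpleGraph.dist_eq_one_iff_adj.mpr hadj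
          omega

private lemma cyc_dist_zero {n : ℕ} (hn : 3 ≤ n) (v : Fin n) :
    (SimpleGraph.cycleGraph n).dist ⟨0, by omega⟩ v = min v.val (n - v.val) := by
  have hconn := cyc_connected hn
  apply le_antisymm
  · refine le_min (dist_add hn v.val ⟨0, by omega⟩ v (by simp)) ?_
    by_cases hv0 : v.val = 0
    · have : v = ⟨0, by omega⟩ := Fin.ext (by simpa using hv0)
      rw [this, SimpleGraph.dist_self]; omega
    · have hlast : n - 1 < n := by omega
      have h1 : (SimpleGraph.cycleGraph n).dist v ⟨n - 1, hlast⟩ ≤ n - 1 - v.val :=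
        dist_add hn (n - 1 - v.val) v ⟨n - 1, hlast⟩
          (by have := v.isLt; simp only [Fin.val_mk]; omega)
      have h2 : (SimpleGraph.cycleGraph n).dist ⟨n - 1, hlast⟩ ⟨0, by omega⟩ = 1 :=
        SimpleGraph.dist_eq_one_iff_adj.mpr (by rw [cyc_adj hn]; simp only [Fin.val_mk]; right; right; right; exact ⟨trivial, by omega⟩)
      rw [SimpleGraph.dist_comm]
      calc (SimpleGraph.cycleGraph n).dist v ⟨0, by omega⟩
          ≤ _ + _ := hconn.dist_triangle (v := ⟨n - 1, hlast⟩)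
        _ ≤ (n - 1 - v.val) + 1 := add_le_add h1 (le_of_eq h2)
        _ ≤ n - v.val := by have hvlt := v.isLt; omega
  · by_cases hv : v = ⟨0, by omega⟩
    · subst hv; simp
    · have hne : (SimpleGraph.cycleGraph n).dist ⟨0, by omega⟩ v ≠ 0 := by
        exact fun h => hv ((hconn.dist_eq_zero_iff.mp h).symm)
      obtain ⟨w, hw⟩ := SimpleGraph.exists_walk_of_dist_ne_zero hne
      have := walk_ge hn w
      simp only at this
      omega

private def Bcond (n w : ℕ) : Prop := (2*w ≤ n ∧ w % 2 = 1) ∨ (n < 2*w ∧ (n - w) % 2 = 0)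
private def Aset (n : ℕ) : Set (Fin n) := {v | v.val = 0}
private def Bset (n : ℕ) : Set (Fin n) := {v | v.val ≠ 0 ∧ Bcond n v.val}
private def Cset (n : ℕ) : Set (Fin n) := {v | v.val ≠ 0 ∧ ¬ Bcond n v.val}

private lemma mem_Aset {n : ℕ} {v : Fin n} : v ∈ Aset n ↔ v.val = 0 := Iff.rfl
private lemma mem_Bset {n : ℕ} {v : Fin n} : v ∈ Bset n ↔ v.val ≠ 0 ∧ Bcond n v.val := Iff.rfl
private lemma mem_Cset {n : ℕ} {v : Fin n} : v ∈ Cset n ↔ v.val ≠ 0 ∧ ¬ Bcond n v.val := Iff.rfl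

private lemma pDist_singleton {V : Type*} (G : SimpleGraph V) (v x : V) :
    pDist G v {x} = G.dist v x := by
  simp [pDist]

private lemma pDist_zero_of_mem {V : Type*} (G : SimpleGraph V) {v : V} {S : Set V}
    (h : v ∈ S) : pDist G v S = 0 :=
  Nat.eq_zero_of_le_zero (Nat.sInf_le ⟨v, h, SimpleGraph.dist_self⟩)

private lemma mem_of_pDist_zero {V : Type*} {G : SimpleGraph V} (hc : G.Connected)
    {v : V} {S : Set V} (hS : S.Nonempty) (h : pDist G v S = 0) : v ∈ S := by
  have h0 : (0 : ℕ) ∈ G.dist v '' S := h ▸ Nat.sInf_mem (hS.image _)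
  obtain ⟨s, hs, hd⟩ := h0
  rwa [hc.dist_eq_zero_iff.mp hd]

private lemma pDist_eq_one {V : Type*} {G : SimpleGraph V} (hc : G.Connected)
    {v : V} {S : Set V} (hvS : v ∉ S) {s : V} (hs : s ∈ S) (ha : G.Adj v s) :
    pDist G v S = 1 := by
  have h1 : pDist G v S ≤ 1 := Nat.sInf_le ⟨s, hs, SimpleGraph.dist_eq_one_iff_adj.mpr ha⟩
  have h0 : pDist G v S ≠ 0 := fun h => hvS (mem_of_pDist_zero hc ⟨s, hs⟩ h)
  omega

theorem stmt_3 (n : ℕ) (hn : 3 ≤ n) : etaP (SimpleGraph.cycleGraph n) = 3 := by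
  have hconn := cyc_connected hn
  have h0n : 0 < n := by omega
  have h1n : 1 < n := by omega
  have h2n : 2 < n := by omega
  set G : SimpleGraph (Fin n) := SimpleGraph.cycleGraph n with hG
  set z : Fin n := ⟨0, h0n⟩ with hz
  set o : Fin n := ⟨1, h1n⟩ with ho
  set t : Fin n := ⟨2, h2n⟩ with ht
  have hzval : z.val = 0 := rfl
  have hoval : o.val = 1 := rfl
  have htval : t.val = 2 := rfl
  have hzo : z ≠ o := Fin.ne_of_val_ne (by rw [hzval, hoval]; omega)
  have hzt : z ≠ t := Fin.ne_of_val_ne (by rw [hzval, htval]; omega)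
  have hot : o ≠ t := Fin.ne_of_val_ne (by rw [hoval, htval]; omega)
  have hzA : z ∈ Aset n := mem_Aset.mpr hzval
  have hoB : o ∈ Bset n := mem_Bset.mpr ⟨by omega, Or.inl ⟨by omega, by omega⟩⟩
  have htC : t ∈ Cset n := mem_Cset.mpr ⟨by omega, by simp only [Bcond]; omega⟩
  have hAeq : Aset n = ({z} : Set (Fin n)) := by
    ext w
    simp only [mem_Aset, Set.mem_singleton_iff, Fin.ext_iff, hzval]
  have hBne : (Bset n).Nonempty := ⟨o, hoB⟩
  -- distances to z
  have hdz : ∀ u : Fin n, G.dist u z = min u.val (n - u.val) := by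
    intro u
    rw [hG, SimpleGraph.dist_comm]
    exact cyc_dist_zero hn u
  -- the partition
  set P : Set (Set (Fin n)) := {Aset n, Bset n, Cset n} with hP
  have hAP : Aset n ∈ P := by simp [hP]
  have hBP : Bset n ∈ P := by simp [hP]
  have hCP : Cset n ∈ P := by simp [hP]
  have hmemP : ∀ Y, Y ∈ P ↔ Y = Aset n ∨ Y = Bset n ∨ Y = Cset n := by
    intro Y
    simp [hP]
  have hpart : Setoid.IsPartition P := by
    constructor
    · intro h
      rcases (hmemP ∅).mp h with h' | h' | h'
      · exact Set.notMem_empty z (h'.symm ▸ hzA)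
      · exact Set.notMem_empty o (h'.symm ▸ hoB)
      · exact Set.notMem_empty t (h'.symm ▸ htC)
    · intro v
      by_cases hv0 : v.val = 0
      · refine ⟨Aset n, ⟨hAP, mem_Aset.mpr hv0⟩, ?_⟩
        rintro Y ⟨hY, hvY⟩
        rcases (hmemP Y).mp hY with rfl | rfl | rfl
        · rfl
        · exact absurd hv0 (mem_Bset.mp hvY).1
        · exact absurd hv0 (mem_Cset.mp hvY).1
      · by_cases hvB : Bcond n v.val
        · refine ⟨Bset n, ⟨hBP, mem_Bset.mpr ⟨hv0, hvB⟩⟩, ?_⟩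
          rintro Y ⟨hY, hvY⟩
          rcases (hmemP Y).mp hY with rfl | rfl | rfl
          · exact absurd (mem_Aset.mp hvY) hv0
          · rfl
          · exact absurd hvB (mem_Cset.mp hvY).2
        · refine ⟨Cset n, ⟨hCP, mem_Cset.mpr ⟨hv0, hvB⟩⟩, ?_⟩
          rintro Y ⟨hY, hvY⟩
          rcases (hmemP Y).mp hY with rfl | rfl | rfl
          · exact absurd (mem_Aset.mp hvY) hv0
          · exact absurd (mem_Bset.mp hvY).2 hvB
          · rfl
  -- set distinctness and cardinality
  have hAB : Aset n ≠ Bset n := fun h => (mem_Bset.mp (h ▸ hzA)).1 hzval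
  have hAC : Aset n ≠ Cset n := fun h => (mem_Cset.mp (h ▸ hzA)).1 hzval
  have hBC : Bset n ≠ Cset n := fun h => (mem_Cset.mp (h ▸ hoB)).2 (mem_Bset.mp hoB).2
  have hcard : P.ncard = 3 := by
    have hA_nm : Aset n ∉ ({Bset n, Cset n} : Set (Set (Fin n))) := by
      simp only [Set.mem_insert_iff, Set.mem_singleton_iff]
      push_neg
      exact ⟨hAB, hAC⟩
    have hB_nm : Bset n ∉ ({Cset n} : Set (Set (Fin n))) := by
      simpa using hBC
    rw [hP, Set.ncard_insert_of_notMem hA_nm (Set.toFinite _),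
        Set.ncard_insert_of_notMem hB_nm (Set.toFinite _), Set.ncard_singleton]
  -- domination
  have hdom : IsDominatingFam G P := by
    intro v
    have hvlt := v.isLt
    by_cases hv0 : v.val = 0
    · refine ⟨Bset n, hBP, pDist_eq_one hconn (fun hmem => (mem_Bset.mp hmem).1 hv0) hoB ?_⟩
      exact (cyc_adj hn).mpr (Or.inl (by rw [hv0, hoval]))
    · by_cases hv1 : v.val = 1 ∨ v.val + 1 = n
      · refine ⟨Aset n, hAP, pDist_eq_one hconn (fun hmem => hv0 (mem_Aset.mp hmem)) hzA ?_⟩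
        apply (cyc_adj hn).mpr
        rcases hv1 with h | h
        · exact Or.inr (Or.inl (by rw [hzval, h]))
        · exact Or.inr (Or.inr (Or.inr ⟨hzval, h⟩))
      · push_neg at hv1
        have hb1 : 2 ≤ v.val := by omega
        have hb2 : v.val + 2 ≤ n := by omega
        have hplt : v.val - 1 < n := by omega
        have hslt : v.val + 1 < n := by omega
        have hap : G.Adj v ⟨v.val - 1, hplt⟩ :=
          (cyc_adj hn).mpr (Or.inr (Or.inl (by simp only [Fin.val_mk]; omega)))
        have has : G.Adj v ⟨v.val + 1, hslt⟩ :=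
          (cyc_adj hn).mpr (Or.inl (by simp only [Fin.val_mk]))
        by_cases hvB : Bcond n v.val
        · have key : ¬ Bcond n (v.val - 1) ∨ ¬ Bcond n (v.val + 1) := by
            simp only [Bcond] at hvB ⊢; omega
          have hvC : v ∉ Cset n := fun hmem => (mem_Cset.mp hmem).2 hvB
          rcases key with hk | hk
          · exact ⟨Cset n, hCP, pDist_eq_one hconn hvC
              (mem_Cset.mpr ⟨by simp only [Fin.val_mk]; omega, hk⟩) hap⟩
          · exact ⟨Cset n, hCP, pDist_eq_one hconn hvC
              (mem_Cset.mpr ⟨by simp only [Fin.val_mk]; omega, hk⟩) has⟩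
        · have key : Bcond n (v.val - 1) ∨ Bcond n (v.val + 1) := by
            simp only [Bcond] at hvB ⊢; omega
          have hvB' : v ∉ Bset n := fun hmem => hvB (mem_Bset.mp hmem).2
          rcases key with hk | hk
          · exact ⟨Bset n, hBP, pDist_eq_one hconn hvB'
              (mem_Bset.mpr ⟨by simp only [Fin.val_mk]; omega, hk⟩) hap⟩
          · exact ⟨Bset n, hBP, pDist_eq_one hconn hvB'
              (mem_Bset.mpr ⟨by simp only [Fin.val_mk]; omega, hk⟩) has⟩
  -- resolving
  have hres : IsResolvingFam G P := by
    intro u v huv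
    by_cases hd : G.dist u z = G.dist v z
    · have hult := u.isLt
      have hvlt := v.isLt
      have he : min u.val (n - u.val) = min v.val (n - v.val) := by
        rw [hdz u, hdz v] at hd; exact hd
      have hneq : u.val ≠ v.val := fun h => huv (Fin.ext h)
      have key : (u.val ≠ 0 ∧ Bcond n u.val ∧ ¬(v.val ≠ 0 ∧ Bcond n v.val)) ∨
          (v.val ≠ 0 ∧ Bcond n v.val ∧ ¬(u.val ≠ 0 ∧ Bcond n u.val)) := by
        simp only [Bcond]; omega
      rcases key with ⟨h1, h2, h3⟩ | ⟨h1, h2, h3⟩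
      · refine ⟨Bset n, hBP, ?_⟩
        rw [pDist_zero_of_mem G (mem_Bset.mpr ⟨h1, h2⟩)]
        exact fun hc => (h3 (mem_Bset.mp (mem_of_pDist_zero hconn hBne hc.symm)))
      · refine ⟨Bset n, hBP, ?_⟩
        rw [pDist_zero_of_mem G (mem_Bset.mpr ⟨h1, h2⟩)]
        exact fun hc => h3 (mem_Bset.mp (mem_of_pDist_zero hconn hBne hc))
    · refine ⟨Aset n, hAP, ?_⟩
      rw [hAeq, pDist_singleton, pDist_singleton]
      exact hd
  -- lower bound
  have hlb : ∀ k, (∃ Q : Set (Set (Fin n)), Setoid.IsPartition Q ∧ IsResolvingFam G Q ∧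
      IsDominatingFam G Q ∧ Q.ncard = k) → 3 ≤ k := by
    rintro k ⟨Q, hqpart, hqres, hqdom, rfl⟩
    by_contra hlt
    push_neg at hlt
    have hfin : Q.Finite := Set.toFinite Q
    have hqne : Q.Nonempty := by
      obtain ⟨b, ⟨hbQ, _⟩, _⟩ := hqpart.2 z
      exact ⟨b, hbQ⟩
    have hpos : 0 < Q.ncard := (Set.ncard_pos hfin).mpr hqne
    have h12 : Q.ncard = 1 ∨ Q.ncard = 2 := by omega
    rcases h12 with h1 | h2
    · obtain ⟨S, rfl⟩ := Set.ncard_eq_one.mp h1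
      have hzS : z ∈ S := by
        obtain ⟨b, ⟨hbQ, hzb⟩, _⟩ := hqpart.2 z
        rwa [Set.mem_singleton_iff.mp hbQ] at hzb
      obtain ⟨W, hW, hd1⟩ := hqdom z
      rw [Set.mem_singleton_iff.mp hW] at hd1
      rw [pDist_zero_of_mem G hzS] at hd1
      exact one_ne_zero hd1.symm
    · obtain ⟨S, T, hST, rfl⟩ := Set.ncard_eq_two.mp h2
      have hcover : ∀ v : Fin n, v ∈ S ∨ v ∈ T := by
        intro v
        obtain ⟨b, ⟨hbQ, hvb⟩, _⟩ := hqpart.2 v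
        rcases hbQ with rfl | hbT
        · exact Or.inl hvb
        · rw [Set.mem_singleton_iff.mp hbT] at hvb
          exact Or.inr hvb
      have hdomS : ∀ v ∈ S, pDist G v T = 1 := by
        intro v hv
        obtain ⟨W, hW, hd1⟩ := hqdom v
        rcases hW with rfl | hWT
        · rw [pDist_zero_of_mem G hv] at hd1
          exact absurd hd1.symm one_ne_zero
        · rwa [Set.mem_singleton_iff.mp hWT] at hd1
      have hdomT : ∀ v ∈ T, pDist G v S = 1 := by
        intro v hv
        obtain ⟨W, hW, hd1⟩ := hqdom v
        rcases hW with rfl | hWT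
        · assumption
        · rw [Set.mem_singleton_iff.mp hWT, pDist_zero_of_mem G hv] at hd1
          exact absurd hd1.symm one_ne_zero
      have key : ∀ u v : Fin n, u ≠ v → ((u ∈ S ∧ v ∈ S) ∨ (u ∈ T ∧ v ∈ T)) → False := by
        intro u v huv hmem
        obtain ⟨W, hW, hne'⟩ := hqres u v huv
        rcases hmem with ⟨hu, hv⟩ | ⟨hu, hv⟩
        · rcases hW with rfl | hWT
          · exact hne' ((pDist_zero_of_mem G hu).trans (pDist_zero_of_mem G hv).symm)
          · rw [Set.mem_singleton_iff.mp hWT] at hne'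
            exact hne' ((hdomS u hu).trans (hdomS v hv).symm)
        · rcases hW with rfl | hWT
          · exact hne' ((hdomT u hu).trans (hdomT v hv).symm)
          · rw [Set.mem_singleton_iff.mp hWT] at hne'
            exact hne' ((pDist_zero_of_mem G hu).trans (pDist_zero_of_mem G hv).symm)
      rcases hcover z with h1 | h1 <;> rcases hcover o with h2 | h2 <;> rcases hcover t with h3 | h3
      · exact key z o hzo (Or.inl ⟨h1, h2⟩)
      · exact key z o hzo (Or.inl ⟨h1, h2⟩)
      · exact key z t hzt (Or.inl ⟨h1, h3⟩)
      · exact key o t hot (Or.inr ⟨h2, h3⟩)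
      · exact key o t hot (Or.inl ⟨h2, h3⟩)
      · exact key z t hzt (Or.inr ⟨h1, h3⟩)
      · exact key z o hzo (Or.inr ⟨h1, h2⟩)
      · exact key z o hzo (Or.inr ⟨h1, h2⟩)
  have hmem3 : ∃ Q : Set (Set (Fin n)), Setoid.IsPartition Q ∧ IsResolvingFam G Q ∧
      IsDominatingFam G Q ∧ Q.ncard = 3 := ⟨P, hpart, hres, hdom, hcard⟩
  rw [hG] at hmem3 hlb ⊢
  unfold etaP
  exact le_antisymm (Nat.sInf_le hmem3) (le_csInf ⟨3, hmem3⟩ fun k hk => hlb k hk)
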